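/- Let λ > 0 and let X_λ be an integer-valued random variable with P(X_λ = k) = (tanh(λπ)/π)·λ/(λ² + k²), k ∈ ℤ. Then for all t with 0 ≤ t ≤ 2π, E[e^{itX_λ}] = cosh(λ(t - π))/cosh(λπ). -/

import Mathlib

/-!
The function `x ↦ cosh (λ (x - π))` is continuous on `[0, 2π]` with equal values at the
endpoints, and an explicit primitive shows that its Fourier coefficients are
`λ sinh (λπ) / (π (λ² + n²))`. These are summable, so the Fourier series converges to the
function at every point of `[0, 2π]`. After division by `cosh (λπ)` the coefficients are exactly
the probabilities `P(X = n)`, and the series becomes `E[exp (i t X)]`.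
-/

open Real MeasureTheory Complex

theorem hasSum_fourierCoeffOn_mul_exp {a b : ℝ} (hab : a < b) {f : ℝ → ℂ}
    (hf : ContinuousOn f (Set.Icc a b)) (hper : f a = f b)
    (hsum : Summable (fourierCoeffOn hab f)) {x : ℝ} (hx : x ∈ Set.Icc a b) :
    HasSum (fun n : ℤ => fourierCoeffOn hab f n * cexp (2 * π * I * n * x / (b - a))) (f x) := by
  have : Fact (0 < b - a) := ⟨sub_pos.mpr hab⟩
  have hb : a + (b - a) = b := add_sub_cancel a b
  let F : C(AddCircle (b - a), ℂ) :=
    ⟨AddCircle.liftIco (b - a) a f, AddCircle.liftIco_continuous (by rwa [hb]) (by rwa [hb])⟩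
  have hcoeff : fourierCoeff F = fourierCoeffOn hab f := by
    ext n
    rw [ContinuousMap.coe_mk, fourierCoeff_liftIco_eq]
    congr 1
  have hFx : F x = f x := by
    rcases hx.2.lt_or_eq with hxb | hxb
    · exact AddCircle.liftIco_coe_apply (by rw [hb]; exact ⟨hx.1, hxb⟩)
    · have hba := AddCircle.coe_add_period (b - a) a
      rw [hb] at hba
      rw [hxb, hba, ← hper]
      exact AddCircle.liftIco_coe_apply (by simpa using sub_pos.mpr hab)
  have hF := has_pointwise_sum_fourier_series_of_summable (hcoeff ▸ hsum) (x : AddCircle (b - a))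
  simpa only [hcoeff, hFx, smul_eq_mul, fourier_coe_apply, ofReal_sub] using hF

theorem hasDerivAt_exp_mul_sinh_cosh (l n x : ℝ) :
    HasDerivAt
      (fun x : ℝ => cexp (-(n * x * I)) *
        (l * (Real.sinh (l * (x - π)) : ℂ) + n * I * (Real.cosh (l * (x - π)) : ℂ)))
      (cexp (-(n * x * I)) * (Real.cosh (l * (x - π)) : ℂ) * ((l : ℂ) ^ 2 + (n : ℂ) ^ 2))
      x := by
  have hlin : HasDerivAt (fun x : ℝ => l * (x - π)) l x := by
    simpa using ((hasDerivAt_id x).sub_const π).const_mul l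
  have hexp :
      HasDerivAt (fun x : ℝ => cexp (-(n * x * I))) (cexp (-(n * x * I)) * -(n * I)) x := by
    have := ((hasDerivAt_id x).ofReal_comp.const_mul (n : ℂ)).mul_const I |>.neg
    simpa using this.cexp
  have hsinh := ((Real.hasDerivAt_sinh _).comp x hlin).ofReal_comp
  have hcosh := ((Real.hasDerivAt_cosh _).comp x hlin).ofReal_comp
  refine (hexp.mul ((hsinh.const_mul (l : ℂ)).add (hcosh.const_mul ((n : ℂ) * I)))).congr_deriv
    ?_
  simp only [Function.comp_apply, Pi.add_apply, ofReal_mul]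
  linear_combination -(cexp (-(n * x * I)) * (Real.cosh (l * (x - π)) : ℂ) * (n : ℂ) ^ 2) * I_sq

theorem integral_exp_mul_cosh (l : ℝ) (hl : l ≠ 0) (n : ℤ) :
    ∫ x in (0)..(2 * π), cexp (-(n * x * I)) * Real.cosh (l * (x - π)) =
      ((2 * l * Real.sinh (l * π) / (l ^ 2 + n ^ 2) : ℝ) : ℂ) := by
  have hne : (l : ℂ) ^ 2 + (n : ℂ) ^ 2 ≠ 0 := by
    exact_mod_cast (by positivity : l ^ 2 + (n : ℝ) ^ 2 ≠ 0)
  have hprim := fun x (_ : x ∈ Set.uIcc 0 (2 * π)) =>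
    (hasDerivAt_exp_mul_sinh_cosh l n x).div_const ((l : ℂ) ^ 2 + (n : ℂ) ^ 2)
  simp only [ofReal_intCast, mul_div_assoc, div_self hne, mul_one] at hprim
  rw [intervalIntegral.integral_eq_sub_of_hasDerivAt hprim
    ((by fun_prop : Continuous _).intervalIntegrable _ _)]
  have hper : cexp (-(n * (2 * π : ℝ) * I)) = 1 := by
    rw [← exp_int_mul_two_pi_mul_I (-n)]; push_cast; ring_nf
  rw [hper, show l * (2 * π - π) = l * π by ring, show l * (0 - π) = -(l * π) by ring,
    Real.sinh_neg, Real.cosh_neg]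
  simp only [ofReal_zero, mul_zero, zero_mul, neg_zero, Complex.exp_zero, one_mul]
  push_cast
  field_simp
  ring

theorem fourierCoeffOn_cosh {l : ℝ} (hl : l ≠ 0) (n : ℤ) :
    fourierCoeffOn two_pi_pos (fun x => (Real.cosh (l * (x - π)) : ℂ)) n =
      ((l * Real.sinh (l * π) / π / (l ^ 2 + n ^ 2) : ℝ) : ℂ) := by
  rw [fourierCoeffOn_eq_integral]
  simp_rw [fourier_coe_apply]
  have hexp (x : ℝ) :
      cexp (2 * π * I * (-n : ℤ) * x / (2 * π - 0 : ℝ)) = cexp (-(n * x * I)) := by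
    congr 1
    push_cast
    field_simp
    ring
  simp_rw [hexp, smul_eq_mul, integral_exp_mul_cosh l hl n, real_smul]
  push_cast
  field_simp
  ring

theorem summable_one_div_sq_add_intCast_sq (l : ℝ) :
    Summable fun n : ℤ => 1 / (l ^ 2 + (n : ℝ) ^ 2) := by
  refine Summable.of_norm_bounded_eventually (summable_one_div_int_pow.mpr one_lt_two) ?_
  filter_upwards [(Set.finite_singleton (0 : ℤ)).compl_mem_cofinite] with n hn
  have hn : (n : ℝ) ≠ 0 := by simpa using hn
  rw [Real.norm_of_nonneg (by positivity)]
  gcongr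
  exact le_add_of_nonneg_left (sq_nonneg l)

theorem hasSum_fourier_series_cosh {l : ℝ} (hl : l ≠ 0) {x : ℝ} (hx : x ∈ Set.Icc 0 (2 * π)) :
    HasSum
      (fun n : ℤ => ((l * Real.sinh (l * π) / π / (l ^ 2 + n ^ 2) : ℝ) : ℂ) * cexp (n * x * I))
      (Real.cosh (l * (x - π))) := by
  have hsum : Summable fun n : ℤ => l * Real.sinh (l * π) / π / (l ^ 2 + n ^ 2) := by
    simpa only [mul_one_div] using
      (summable_one_div_sq_add_intCast_sq l).mul_left (l * Real.sinh (l * π) / π)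
  have hper : (Real.cosh (l * (0 - π)) : ℂ) = Real.cosh (l * (2 * π - π)) := by
    rw [show l * (0 - π) = -(l * (2 * π - π)) by ring, Real.cosh_neg]
  have hfourier := hasSum_fourierCoeffOn_mul_exp two_pi_pos
    (f := fun x => (Real.cosh (l * (x - π)) : ℂ)) (Continuous.continuousOn (by fun_prop)) hper
    (by rw [funext (fourierCoeffOn_cosh hl)]; exact summable_ofReal.mpr hsum) hx
  convert hfourier using 2 with n
  rw [fourierCoeffOn_cosh hl]
  congr 2
  push_cast
  field_simp
  ring

theorem integral_comp_eq_tsum_measureReal {Ω α E : Type*} [MeasurableSpace Ω]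
    [MeasurableSpace α] [MeasurableSingletonClass α] [Countable α] [NormedAddCommGroup E]
    [NormedSpace ℝ E] [CompleteSpace E] {μ : Measure Ω} {X : Ω → α} (hX : Measurable X) {g : α → E}
    (hg : Integrable g (μ.map X)) :
    ∫ ω, g (X ω) ∂μ = ∑' a, μ.real (X ⁻¹' {a}) • g a := by
  rw [← integral_map hX.aemeasurable hg.aestronglyMeasurable, integral_countable hg]
  simp_rw [map_measureReal_apply hX (measurableSet_singleton _)]

theorem stmt_15 {Ω : Type*} [MeasurableSpace Ω] (μ : Measure Ω) [IsProbabilityMeasure μ]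
    (l : ℝ) (hl : 0 < l) (X : Ω → ℤ) (hX : Measurable X)
    (hpmf : ∀ k : ℤ, (μ {ω | X ω = k}).toReal =
      (Real.tanh (l * π) / π) * (l / (l ^ 2 + (k : ℝ) ^ 2)))
    (t : ℝ) (ht : 0 ≤ t ∧ t ≤ 2 * π) :
    ∫ ω, Complex.exp (t * (X ω : ℝ) * Complex.I) ∂μ =
      ((Real.cosh (l * (t - π)) / Real.cosh (l * π) : ℝ) : ℂ) := by
  have hint : Integrable (fun k : ℤ => cexp (t * (k : ℝ) * I)) (μ.map X) := by
    have := Measure.isProbabilityMeasure_map (μ := μ) hX.aemeasurable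
    refine .of_bound (measurable_of_countable _).aestronglyMeasurable 1 (.of_forall fun k => ?_)
    rw [← ofReal_mul, norm_exp_ofReal_mul_I]
  have hcosh : Real.cosh (l * π) ≠ 0 := (Real.cosh_pos _).ne'
  have hterm (k : ℤ) : μ.real (X ⁻¹' {k}) • cexp (t * (k : ℝ) * I) =
      ((l * Real.sinh (l * π) / π / (l ^ 2 + k ^ 2) : ℝ) : ℂ) * cexp (k * t * I) /
        Real.cosh (l * π) := by
    rw [measureReal_def, show X ⁻¹' {k} = {ω | X ω = k} from rfl, hpmf, real_smul,
      Real.tanh_eq_sinh_div_cosh]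
    push_cast
    field_simp
  rw [integral_comp_eq_tsum_measureReal hX hint, tsum_congr hterm,
    ((hasSum_fourier_series_cosh hl.ne' ht).div_const _).tsum_eq, ofReal_div]
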